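/- Let T be a triangulation of a convex m-gon and H = {a,b,c} a triangle of T (all sides arcs of T or boundary edges). Then for every x ∈ [m] \ H, χ_T(x, a, b, c) = +1 where a ≺ b ≺ c; consequently [m] \ H is a positive cocircuit and H is a facet of the oriented matroid M_T. -/
import Mathlib


namespace CyclicTri

variable {m : ℕ}

/-- Position of `v` relative to base point `a` in the cyclic order on `ZMod m`. -/
def pos (a v : ZMod m) : ℕ := (v - a).val

/-- `a ≺ b ≺ c` in the cyclic order. -/
def Cyc3 (a b c : ZMod m) : Prop := 0 < pos a b ∧ pos a b < pos a c

/-- `a ≺ b ≺ c ≺ d` in the cyclic order. -/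
def Cyc4 (a b c d : ZMod m) : Prop :=
  0 < pos a b ∧ pos a b < pos a c ∧ pos a c < pos a d

/-- The arcs `xy` and `x'y'` cross: their endpoints interleave cyclically. -/
def Cross (x y x' y' : ZMod m) : Prop := Cyc4 x x' y y' ∨ Cyc4 x' x y' y

/-- `xy` is a diagonal of the polygon: the endpoints are distinct and non-adjacent. -/
def Diag (x y : ZMod m) : Prop := x ≠ y ∧ y ≠ x + 1 ∧ x ≠ y + 1

/-- `A` is (the symmetrised set of arcs of) a triangulation of the convex `m`-gon:
a maximal set of pairwise non-crossing diagonals. -/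
def IsTriangulation (A : Set (ZMod m × ZMod m)) : Prop :=
  (∀ x y, (x, y) ∈ A → (y, x) ∈ A) ∧
  (∀ x y, (x, y) ∈ A → Diag x y) ∧
  (∀ x y x' y', (x, y) ∈ A → (x', y') ∈ A → ¬ Cross x y x' y') ∧
  (∀ x y, Diag x y → (∀ x' y', (x', y') ∈ A → ¬ Cross x y x' y') → (x, y) ∈ A)

/-- There is an arc `xy` of `A` with `a ≺ b ≼ x ≺ c ≺ d ≼ y` (the `+1` case of `χ_T`). -/
def PosCase (A : Set (ZMod m × ZMod m)) (a b c d : ZMod m) : Prop :=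
  ∃ x y, (x, y) ∈ A ∧ 0 < pos a b ∧ pos a b ≤ pos a x ∧ pos a x < pos a c ∧
    pos a c < pos a d ∧ pos a d ≤ pos a y

/-- There is an arc `xy` of `A` with `a ≼ x ≺ b ≺ c ≼ y ≺ d` (the `-1` case of `χ_T`). -/
def NegCase (A : Set (ZMod m × ZMod m)) (a b c d : ZMod m) : Prop :=
  ∃ x y, (x, y) ∈ A ∧ pos a x < pos a b ∧ pos a b < pos a c ∧ pos a c ≤ pos a y ∧
    pos a y < pos a d

open Classical in
/-- The chirotope `χ_T` on cyclically ordered tuples `a ≺ b ≺ c ≺ d`. -/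
noncomputable def chiCyc (A : Set (ZMod m × ZMod m)) (a b c d : ZMod m) : ℤ :=
  if PosCase A a b c d then 1 else if NegCase A a b c d then -1 else 0

end CyclicTri
namespace CyclicTri
variable {m : ℕ}

open Classical in
/-- The alternating extension `χ_T(x, a, b, c)` for `a ≺ b ≺ c` and `x ∉ {a,b,c}`. -/
noncomputable def chiX (A : Set (ZMod m × ZMod m)) (x a b c : ZMod m) : ℤ :=
  if Cyc4 x a b c then chiCyc A x a b c
  else if Cyc4 a x b c then - chiCyc A a x b c
  else chiCyc A a b x c

/-- `xy` is an arc of `B` or a boundary edge of the polygon. -/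
def EdgeOf (B : Set (ZMod m × ZMod m)) (x y : ZMod m) : Prop :=
  (x, y) ∈ B ∨ y = x + 1 ∨ x = y + 1

/-- `abc` is a triangle of the triangulation `A`: all sides are arcs or boundary edges. -/
def IsTriangleOf (A : Set (ZMod m × ZMod m)) (a b c : ZMod m) : Prop :=
  Cyc3 a b c ∧ EdgeOf A a b ∧ EdgeOf A b c ∧ EdgeOf A c a

/-- `{a,b,c}` is a facet of the oriented matroid `M_T`: the complementary cocircuit
has all of its elements of the same sign. -/
def IsFacet (A : Set (ZMod m × ZMod m)) (a b c : ZMod m) : Prop :=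
  Cyc3 a b c ∧
    ((∀ x : ZMod m, x ≠ a → x ≠ b → x ≠ c → chiX A x a b c = 1) ∨
     (∀ x : ZMod m, x ≠ a → x ≠ b → x ≠ c → chiX A x a b c = -1))

end CyclicTri

namespace CyclicTri

variable {m : ℕ}

lemma pos_lt [NeZero m] (a v : ZMod m) : pos a v < m := ZMod.val_lt _

lemma pos_self (a : ZMod m) : pos a a = 0 := by simp [pos]

lemma pos_eq_zero_iff [NeZero m] {a v : ZMod m} : pos a v = 0 ↔ v = a := by
  simp [pos, ZMod.val_eq_zero, sub_eq_zero]

lemma pos_inj [NeZero m] {a u v : ZMod m} (h : pos a u = pos a v) : u = v := by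
  have := ZMod.val_injective m h
  exact sub_left_injective this

lemma pos_trans [NeZero m] (a x y : ZMod m) (hx : x ≠ a) :
    pos x y = (pos a y + (m - pos a x)) % m := by
  have h1 : y - x = (y - a) + (-(x - a)) := by ring
  have h2 : (x - a) ≠ 0 := sub_ne_zero.mpr hx
  show (y - x).val = _
  rw [h1, ZMod.val_add, ZMod.neg_val, if_neg h2]
  rfl

lemma pos_trans' [NeZero m] (a x y : ZMod m) (hx : x ≠ a) :
    pos x y = if pos a x ≤ pos a y then pos a y - pos a x else m + pos a y - pos a x := by
  have hxm : pos a x < m := pos_lt a x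
  have hym : pos a y < m := pos_lt a y
  have hx0 : pos a x ≠ 0 := fun h => hx (pos_eq_zero_iff.mp h)
  rw [pos_trans a x y hx]
  rcases le_or_gt (pos a x) (pos a y) with h | h
  · rw [if_pos h]
    have : pos a y + (m - pos a x) = m + (pos a y - pos a x) := by omega
    rw [this, Nat.add_mod_left, Nat.mod_eq_of_lt (by omega)]
  · rw [if_neg (not_le.mpr h), Nat.mod_eq_of_lt (by omega)]
    omega

lemma succ_iff [NeZero m] (hm : 1 < m) (u v : ZMod m) : v = u + 1 ↔ pos u v = 1 := by
  have h1 : (1 : ZMod m).val = 1 := by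
    rw [ZMod.val_one_eq_one_mod, Nat.mod_eq_of_lt hm]
  constructor
  · intro h
    show (v - u).val = 1
    rw [h]
    simpa using h1
  · intro h
    have : (v - u).val = (1 : ZMod m).val := by rw [h1]; exact h
    have := ZMod.val_injective m this
    have : v = u + 1 := by linear_combination this
    exact this

lemma cyc4_iff (a b c d : ZMod m) :
    Cyc4 a b c d ↔ 0 < pos a b ∧ pos a b < pos a c ∧ pos a c < pos a d := Iff.rfl

end CyclicTri

open CyclicTri in
/-- If `H = {a,b,c}` is a triangle of the triangulation `T`, then `χ_T(x,a,b,c) = +1`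
for every `x ∈ [m] \ H`; consequently `[m] \ H` is a positive cocircuit and `H` is a
facet of `M_T`. -/
theorem stmt_9 (m : ℕ) (hm : 4 ≤ m) (A : Set (ZMod m × ZMod m))
    (hT : IsTriangulation A) (a b c : ZMod m) (h : IsTriangleOf A a b c) :
    (∀ x : ZMod m, x ≠ a → x ≠ b → x ≠ c → chiX A x a b c = 1) ∧
      IsFacet A a b c := by
  haveI : NeZero m := ⟨by omega⟩
  have hm1 : (1:ℕ) < m := by omega
  obtain ⟨hcyc, hab, hbc, hca⟩ := h
  obtain ⟨hb0, hbc'⟩ := hcyc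
  obtain ⟨hsym, hdiag, hnc, hmax⟩ := hT
  have hpbm : pos a b < m := pos_lt a b
  have hpcm : pos a c < m := pos_lt a c
  have hba : b ≠ a := fun h => by rw [h, pos_self] at hb0; omega
  have hca' : c ≠ a := fun h => by rw [h, pos_self] at hbc'; omega
  have key : ∀ x : ZMod m, x ≠ a → x ≠ b → x ≠ c → chiX A x a b c = 1 := by
    intro x hxa hxb hxc
    have hpx0 : pos a x ≠ 0 := fun h => hxa (pos_eq_zero_iff.mp h)
    have hpxb : pos a x ≠ pos a b := fun h => hxb (pos_inj h)
    have hpxc : pos a x ≠ pos a c := fun h => hxc (pos_inj h)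
    have hpxm : pos a x < m := pos_lt a x
    have hxa' : pos x a = m - pos a x := by
      rw [pos_trans' a x a hxa, pos_self, if_neg (by omega)]
      omega
    have hxb' : pos x b =
        if pos a x ≤ pos a b then pos a b - pos a x else m + pos a b - pos a x :=
      pos_trans' a x b hxa
    have hxc' : pos x c =
        if pos a x ≤ pos a c then pos a c - pos a x else m + pos a c - pos a x :=
      pos_trans' a x c hxa
    rcases lt_trichotomy (pos a x) (pos a b) with h1 | h1 | h1
    · -- case 1 : a ≺ x ≺ b ≺ c
      have hxb1 : pos x b = pos a b - pos a x := by rw [hxb', if_pos h1.le]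
      have hxc1 : pos x c = pos a c - pos a x := by rw [hxc', if_pos (by omega)]
      -- the edge ab must be an actual arc
      have habA : (a, b) ∈ A := by
        rcases hab with hA | h2 | h2
        · exact hA
        · rw [succ_iff hm1 a b] at h2; omega
        · rw [succ_iff hm1 b a] at h2
          rw [pos_trans' a b a hba, pos_self, if_neg (by omega)] at h2
          omega
      have hnc4x : ¬ Cyc4 x a b c := by
        rw [cyc4_iff, hxa', hxb1, hxc1]; omega
      have hc4 : Cyc4 a x b c := by
        rw [cyc4_iff]; exact ⟨by omega, h1, hbc'⟩
      have hnotPos : ¬ PosCase A a x b c := by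
        rintro ⟨u, v, huv, -, h3, h4, -, h6⟩
        exact hnc a b u v habA huv (Or.inl ⟨by omega, h4, by omega⟩)
      have hNeg : NegCase A a x b c :=
        ⟨a, b, habA, by rw [pos_self]; omega, h1, le_refl _, hbc'⟩
      rw [chiX, if_neg hnc4x, if_pos hc4, chiCyc, if_neg hnotPos, if_pos hNeg]
      norm_num
    · exact absurd h1 hpxb
    · rcases lt_trichotomy (pos a x) (pos a c) with h2 | h2 | h2
      · -- case 2 : a ≺ b ≺ x ≺ c
        have hxb2 : pos x b = m + pos a b - pos a x := by
          rw [hxb', if_neg (by omega)]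
        have hxc2 : pos x c = pos a c - pos a x := by rw [hxc', if_pos h2.le]
        have hbcA : (b, c) ∈ A := by
          rcases hbc with hA | h3 | h3
          · exact hA
          · rw [succ_iff hm1 b c] at h3
            rw [pos_trans' a b c hba, if_pos hbc'.le] at h3
            omega
          · rw [succ_iff hm1 c b] at h3
            rw [pos_trans' a c b hca', if_neg (by omega)] at h3
            omega
        have hnc4x : ¬ Cyc4 x a b c := by
          rw [cyc4_iff, hxa', hxb2, hxc2]; omega
        have hnc4a : ¬ Cyc4 a x b c := by
          rw [cyc4_iff]; omega
        have hPos : PosCase A a b x c :=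
          ⟨b, c, hbcA, hb0, le_refl _, h1, h2, le_refl _⟩
        rw [chiX, if_neg hnc4x, if_neg hnc4a, chiCyc, if_pos hPos]
      · exact absurd h2 hpxc
      · -- case 3 : a ≺ b ≺ c ≺ x
        have hxb3 : pos x b = m + pos a b - pos a x := by
          rw [hxb', if_neg (by omega)]
        have hxc3 : pos x c = m + pos a c - pos a x := by
          rw [hxc', if_neg (by omega)]
        have hacA : (a, c) ∈ A := by
          rcases hca with hA | h3 | h3
          · exact hsym c a hA
          · rw [succ_iff hm1 c a] at h3
            rw [pos_trans' a c a hca', pos_self, if_neg (by omega)] at h3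
            omega
          · rw [succ_iff hm1 a c] at h3; omega
        have hc4 : Cyc4 x a b c := by
          rw [cyc4_iff, hxa', hxb3, hxc3]; omega
        have hPos : PosCase A x a b c :=
          ⟨a, c, hacA, by rw [hxa']; omega, le_refl _,
            by rw [hxa', hxb3]; omega, by rw [hxb3, hxc3]; omega, le_refl _⟩
        rw [chiX, if_pos hc4, chiCyc, if_pos hPos]
  exact ⟨key, ⟨hb0, hbc'⟩, Or.inl key⟩
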